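/- There exist finite uniformly labeled graphs G_1 and G_2 and vertices u ∈ V(G_1), v ∈ V(G_2) such that for some height h the unfolding trees F_h^u and F_h^v are not isomorphic, while for every height h the 1-redundant neighborhood trees T_{h,1}^u and T_{h,1}^v are isomorphic. Hence there exist vertices that unfolding trees (1-WL) distinguish but 1-NTs do not (part 2 of the expressivity-incomparability theorem). -/

import Mathlib

open scoped Classical

universe u v

/-- A rooted labeled (unordered) tree: a root label together with a list of
child subtrees.  The list order is irrelevant for the isomorphism relation. -/
inductive LTree (L : Type u) : Type u
  | node : L → List (LTree L) → LTree L

namespace LTree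

variable {L : Type u} {L' C : Type v}

/-- The label of the root. -/
def label : LTree L → L
  | node a _ => a

/-- The child subtrees of the root. -/
def children : LTree L → List (LTree L)
  | node _ ts => ts

/-- Isomorphism of rooted labeled trees: there is a bijection between the node
sets preserving the root, the parent–child relation and node labels; for our
representation this means equal root labels and children that correspond, up to
a permutation, to pairwise isomorphic subtrees. -/
inductive Iso : LTree L → LTree L → Prop
  | node (a : L) {ts us vs : List (LTree L)} :
      List.Forall₂ Iso ts vs → vs.Perm us → Iso (node a ts) (node a us)

/-- `Embeds t s` : `t` is an induced rooted subtree of `s`, i.e. the nodes of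
`t` inject into the nodes of `s` preserving the root, labels and the
parent–child relation. -/
inductive Embeds : LTree L → LTree L → Prop
  | node (a : L) {ts us vs : List (LTree L)} :
      List.Forall₂ Embeds ts vs → vs.Subperm us → Embeds (node a ts) (node a us)

/-- Number of nodes of a rooted tree. -/
def size : LTree L → ℕ
  | node _ ts => 1 + (ts.attach.map (fun c => size c.1)).sum
decreasing_by simp_wf; have := List.sizeOf_lt_of_mem c.2; omega

/-- Relabel a tree by `f`. -/
def map (f : L → L') : LTree L → LTree L'
  | node a ts => node (f a) (ts.attach.map (fun c => map f c.1))
decreasing_by simp_wf; have := List.sizeOf_lt_of_mem c.2; omega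

/-- Number of nodes of the tree carrying label `x`. -/
def countLabel [DecidableEq L] (x : L) : LTree L → ℕ
  | node a ts => (if a = x then 1 else 0) + (ts.attach.map (fun c => countLabel x c.1)).sum
decreasing_by simp_wf; have := List.sizeOf_lt_of_mem c.2; omega

/-- Number of nodes at depth `d` carrying label `x`. -/
def countAt [DecidableEq L] (x : L) : ℕ → LTree L → ℕ
  | 0, node a _ => if a = x then 1 else 0
  | d+1, node _ ts => (ts.attach.map (fun c => countAt x d c.1)).sum
termination_by _ t => sizeOf t
decreasing_by simp_wf; have := List.sizeOf_lt_of_mem c.2; omega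

/-- `SubtreeAt t d s` : `s` is the subtree of `t` rooted at one of the nodes of
`t` at depth `d`. -/
inductive SubtreeAt : LTree L → ℕ → LTree L → Prop
  | refl (t : LTree L) : SubtreeAt t 0 t
  | step {t c s : LTree L} {d : ℕ} : c ∈ t.children → SubtreeAt c d s → SubtreeAt t (d+1) s

/-- The AHU canonical value: `ahu f t = f (label t) {{ ahu f c | c child of t }}`,
computed bottom-up (a leaf gets `f (label) ∅`). -/
noncomputable def ahu (f : L → Multiset C → C) : LTree L → C
  | node a ts => f a (↑(ts.attach.map (fun c => ahu f c.1)) : Multiset C)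
decreasing_by simp_wf; have := List.sizeOf_lt_of_mem c.2; omega

end LTree

section Graph

variable {V : Type u} {X : Type v}

/-- The unfolding tree `F_i^v` of height `i` of the vertex `v`, with node labels
given by `μ` (a node representing the graph vertex `x` is labeled `μ x`). -/
noncomputable def SimpleGraph.unfoldingTree (G : SimpleGraph V) [Fintype V] (μ : V → X) :
    ℕ → V → LTree X
  | 0, u => .node (μ u) []
  | i+1, u => .node (μ u) ((G.neighborFinset u).toList.map (G.unfoldingTree μ i))

/-- Auxiliary recursion for `k`-redundant neighborhood trees: `r` is the root
vertex, `d` is the current depth and `x` the currently represented vertex.  A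
neighbor `y` is kept at depth `d + 1` iff `d + 1 ≤ dist r y + k`; since the
minimal depth at which `y` occurs in the unfolding tree rooted at `r` is
`dist r y`, this is exactly the pruning condition
`depth(u) ≤ depth(w) + k` for all nodes `w` with `φ(u) = φ(w)`. -/
noncomputable def SimpleGraph.ntAux (G : SimpleGraph V) [Fintype V] (μ : V → X)
    (r : V) (k : ℕ) : ℕ → ℕ → V → LTree X
  | 0, _, x => .node (μ x) []
  | i+1, d, x => .node (μ x)
      (((G.neighborFinset x).filter (fun y => d + 1 ≤ G.dist r y + k)).toList.map
        (G.ntAux μ r k i (d+1)))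

/-- The `k`-redundant neighborhood tree `T_{i,k}^v` of height `i` of vertex `v`. -/
noncomputable def SimpleGraph.ntTree (G : SimpleGraph V) [Fintype V] (μ : V → X)
    (i k : ℕ) (v : V) : LTree X :=
  G.ntAux μ v k i 0 v

end Graph

/-!
If `r` is adjacent to every other vertex, all vertices lie at distance at most `1` from `r`, so the
`1`-redundant neighborhood tree of `r` stops at depth `2`: below `r` it has, for each neighbor `y`,
a star with `deg y - 1` leaves. With uniform labels it thus only sees the multiset of degrees of the
neighbors of `r`. The cones over `K₃ ⊔ K₂` and over the path `P₅` share this multiset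
`{3, 3, 3, 2, 2}`, but their unfolding trees of height `4` at the apex differ in size: the apex
starts `211` resp. `209` walks of length at most `4`.
-/

namespace LTree

variable {L : Type u}

theorem size_node (a : L) (ts : List (LTree L)) :
    (node a ts).size = 1 + (ts.map size).sum := by
  rw [size, List.attach_map_val]

mutual
theorem Iso.refl : (t : LTree L) → Iso t t
  | .node a ts => .node a (Iso.forall₂_refl ts) (List.Perm.refl ts)

theorem Iso.forall₂_refl : (ts : List (LTree L)) → List.Forall₂ Iso ts ts
  | [] => .nil
  | t :: ts => .cons (Iso.refl t) (Iso.forall₂_refl ts)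
end

theorem Iso.of_perm (a : L) {ts us : List (LTree L)} (h : ts.Perm us) :
    Iso (LTree.node a ts) (LTree.node a us) :=
  .node a (Iso.forall₂_refl ts) h

mutual
theorem Iso.size_eq : {t s : LTree L} → Iso t s → t.size = s.size
  | _, _, .node _ hf hp => by
    rw [size_node, size_node, ← (hp.map size).sum_eq, Iso.map_size_eq hf]

theorem Iso.map_size_eq : {ts vs : List (LTree L)} → List.Forall₂ Iso ts vs →
    ts.map size = vs.map size
  | _, _, .nil => rfl
  | _, _, .cons h hs => by rw [List.map_cons, List.map_cons, h.size_eq, Iso.map_size_eq hs]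
end

def star (n : ℕ) : LTree Unit :=
  node () (List.replicate n (node () []))

end LTree

namespace SimpleGraph

variable {V : Type*} {G : SimpleGraph V} {X : Type*} (μ : V → X)

theorem dist_eq_of_universal {r : V} (hr : ∀ y ≠ r, G.Adj r y) (y : V) :
    G.dist r y = if y = r then 0 else 1 := by
  split_ifs with h
  · rw [h, dist_self]
  · exact dist_eq_one_iff_adj.2 (hr y h)

theorem neighborFinset_fromRel_mem (N : V → Finset V)
    (hsymm : ∀ x y, y ∈ N x → x ∈ N y) (hirr : ∀ x, x ∉ N x) (x : V)
    [Fintype ((fromRel fun x y => y ∈ N x).neighborSet x)] :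
    (fromRel fun x y => y ∈ N x).neighborFinset x = N x := by
  ext y
  simp only [mem_neighborFinset, fromRel_adj]
  exact ⟨fun h => h.2.elim id (hsymm y x), fun h => ⟨fun e => hirr x (e ▸ h), .inl h⟩⟩

variable [Fintype V] (G)

def walksUpTo (N : V → Finset V) : ℕ → V → ℕ
  | 0, _ => 1
  | i + 1, v => 1 + ∑ y ∈ N v, walksUpTo N i y

theorem size_unfoldingTree (i : ℕ) (v : V) :
    (G.unfoldingTree μ i v).size = walksUpTo (fun x => G.neighborFinset x) i v := by
  induction i generalizing v with
  | zero => rw [unfoldingTree, LTree.size_node]; rfl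
  | succ i ih =>
    rw [unfoldingTree, LTree.size_node, walksUpTo, List.map_map, Function.comp_def]
    simp only [ih, Finset.sum_map_toList]

theorem ntAux_zero (r : V) (k d : ℕ) : G.ntAux μ r k 0 d = fun x => .node (μ x) [] :=
  rfl

theorem ntAux_eq_leaf {r : V} {k d : ℕ} (hd : ∀ y, G.dist r y + k ≤ d) (i : ℕ) (x : V) :
    G.ntAux μ r k i d x = .node (μ x) [] := by
  cases i with
  | zero => rfl
  | succ i =>
    rw [ntAux, Finset.filter_false_of_mem fun y _ => by have := hd y; omega,
      Finset.toList_empty, List.map_nil]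

theorem ntTree_succ (i k : ℕ) (r : V) :
    G.ntTree μ (i + 1) k r =
      .node (μ r) ((G.neighborFinset r).toList.map (G.ntAux μ r k i 1)) := by
  rw [ntTree, ntAux, Finset.filter_true_of_mem fun y hy => by
    rw [dist_eq_one_iff_adj.2 ((mem_neighborFinset ..).1 hy)]; omega]

variable {G}

theorem ntAux_one_succ_of_universal {r : V} (hr : ∀ y ≠ r, G.Adj r y) (i : ℕ) {y : V}
    (hy : y ≠ r) : G.ntAux (fun _ => ()) r 1 (i + 1) 1 y = LTree.star (G.degree y - 1) := by
  have hleaf := G.ntAux_eq_leaf (fun _ => ()) (r := r) (k := 1) (d := 2)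
    (fun z => by rw [dist_eq_of_universal hr]; split_ifs <;> omega) i
  have hfilter : (G.neighborFinset y).filter (fun z => 1 + 1 ≤ G.dist r z + 1) =
      (G.neighborFinset y).erase r := by
    rw [← Finset.filter_ne']
    refine Finset.filter_congr fun z _ => ?_
    rw [dist_eq_of_universal hr]
    split_ifs <;> simp_all
  rw [ntAux, hfilter, funext hleaf, List.map_const', Finset.length_toList,
    Finset.card_erase_of_mem ((mem_neighborFinset ..).2 (hr y hy).symm),
    card_neighborFinset_eq_degree, LTree.star]

theorem iso_ntTree_of_universal {W : Type*} [Fintype W] {H : SimpleGraph W} {r : V} {s : W}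
    (hr : ∀ y ≠ r, G.Adj r y) (hs : ∀ y ≠ s, H.Adj s y)
    (hdeg : (G.neighborFinset r).val.map (fun y => G.degree y) =
      (H.neighborFinset s).val.map (fun y => H.degree y)) :
    ∀ i, LTree.Iso (G.ntTree (fun _ => ()) i 1 r) (H.ntTree (fun _ => ()) i 1 s)
  | 0 => LTree.Iso.refl _
  | i + 1 => by
    rw [ntTree_succ, ntTree_succ]
    refine LTree.Iso.of_perm () (Multiset.coe_eq_coe.1 ?_)
    rw [← Multiset.map_coe, ← Multiset.map_coe, Finset.coe_toList, Finset.coe_toList]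
    cases i with
    | zero =>
      have hcard := congrArg Multiset.card hdeg
      rw [Multiset.card_map, Multiset.card_map] at hcard
      rw [ntAux_zero, ntAux_zero, Multiset.map_const', Multiset.map_const', hcard]
    | succ i =>
      rw [Multiset.map_congr rfl fun y hy => ntAux_one_succ_of_universal hr i (G.ne_of_adj
          ((mem_neighborFinset ..).1 hy)).symm,
        Multiset.map_congr rfl fun y hy => ntAux_one_succ_of_universal hs i (H.ne_of_adj
          ((mem_neighborFinset ..).1 hy)).symm]
      simpa only [Multiset.map_map, Function.comp_def] using
        congrArg (Multiset.map fun n => LTree.star (n - 1)) hdeg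

end SimpleGraph

open SimpleGraph

-- Vertex `0` is the apex; the triangle is `1 2 3` and the edge `4 5`, the path is `1 2 3 4 5`.
def coneK3K2Nbrs : Fin 6 → Finset (Fin 6)
  | 0 => {1, 2, 3, 4, 5} | 1 => {0, 2, 3} | 2 => {0, 1, 3} | 3 => {0, 1, 2} | 4 => {0, 5}
  | 5 => {0, 4}

def coneP5Nbrs : Fin 6 → Finset (Fin 6)
  | 0 => {1, 2, 3, 4, 5} | 1 => {0, 2} | 2 => {0, 1, 3} | 3 => {0, 2, 4} | 4 => {0, 3, 5}
  | 5 => {0, 4}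

def coneK3K2 : SimpleGraph (Fin 6) := fromRel fun x y => y ∈ coneK3K2Nbrs x

def coneP5 : SimpleGraph (Fin 6) := fromRel fun x y => y ∈ coneP5Nbrs x

theorem neighborFinset_coneK3K2 (x : Fin 6) : coneK3K2.neighborFinset x = coneK3K2Nbrs x := by
  unfold coneK3K2; convert neighborFinset_fromRel_mem coneK3K2Nbrs (by decide) (by decide) x

theorem neighborFinset_coneP5 (x : Fin 6) : coneP5.neighborFinset x = coneP5Nbrs x := by
  unfold coneP5; convert neighborFinset_fromRel_mem coneP5Nbrs (by decide) (by decide) x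

theorem coneK3K2_adj_zero (y : Fin 6) (hy : y ≠ 0) : coneK3K2.Adj 0 y := by
  rw [← mem_neighborFinset, neighborFinset_coneK3K2]
  revert y; decide

theorem coneP5_adj_zero (y : Fin 6) (hy : y ≠ 0) : coneP5.Adj 0 y := by
  rw [← mem_neighborFinset, neighborFinset_coneP5]
  revert y; decide

/-- There exist finite uniformly labeled graphs `G₁, G₂` and
vertices `u ∈ V(G₁)`, `v ∈ V(G₂)` such that for some height `h` the unfolding
trees `F_h^u` and `F_h^v` are not isomorphic, while for every height `h` the
1-redundant neighborhood trees `T_{h,1}^u` and `T_{h,1}^v` are isomorphic. -/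
theorem exists_wl_distinguishes_but_not_oneNT :
    ∃ (n₁ n₂ : ℕ) (G₁ : SimpleGraph (Fin n₁)) (G₂ : SimpleGraph (Fin n₂))
      (u : Fin n₁) (v : Fin n₂),
      (∃ h : ℕ, ¬ LTree.Iso (G₁.unfoldingTree (fun _ => ()) h u)
          (G₂.unfoldingTree (fun _ => ()) h v)) ∧
      (∀ h : ℕ, LTree.Iso (G₁.ntTree (fun _ => ()) h 1 u)
          (G₂.ntTree (fun _ => ()) h 1 v)) := by
  refine ⟨6, 6, coneK3K2, coneP5, 0, 0, ⟨4, fun hiso => ?_⟩,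
    iso_ntTree_of_universal coneK3K2_adj_zero coneP5_adj_zero ?_⟩
  · have hsize := hiso.size_eq
    rw [size_unfoldingTree, size_unfoldingTree, funext neighborFinset_coneK3K2,
      funext neighborFinset_coneP5] at hsize
    exact absurd hsize (by decide)
  · simp only [← card_neighborFinset_eq_degree, neighborFinset_coneK3K2, neighborFinset_coneP5]
    decide
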